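/- Let $P_1(t) = \sum_{j\ge 0} a_{j1} t^{q^j} \in \mathcal{R}_K$ with $a_{01} \ne 0$. Then $P_1$ is invertible in $\mathcal{R}_K$ with respect to composition, i.e., there exists $Q \in \mathcal{R}_K$ with $P_1 \circ Q = Q \circ P_1 = t$. -/
import Mathlib


open scoped Classical

/- STATEMENT 19: if P₁ = ∑_{j≥0} a_{j1} t^{q^j} ∈ 𝓡_K has a₀₁ ≠ 0, then P₁ is
invertible in 𝓡_K with respect to composition: there is Q ∈ 𝓡_K with
P₁ ∘ Q = Q ∘ P₁ = t. -/

/-- The field K = 𝔽_q((x)) of formal Laurent series over 𝔽_q, q = p^v. -/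
abbrev Kf (p v : ℕ) [Fact p.Prime] := LaurentSeries (GaloisField p v)

/-- The absolute value |t| = q^{-N} on K, where N is the order of vanishing. -/
noncomputable def labs (p v : ℕ) [Fact p.Prime] (f : Kf p v) : ℝ :=
  if f = 0 then 0 else ((p : ℝ) ^ v) ^ (-f.order)

/-- Membership in 𝓡_K: coefficients satisfy |a_k| ≤ A^{q^k} for some constant A > 0. -/
def InRK (p v : ℕ) [Fact p.Prime] (a : ℕ → Kf p v) : Prop :=
  ∃ A > (0 : ℝ), ∀ k, labs p v (a k) ≤ A ^ (p ^ v) ^ k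

/-- Coefficients of the composition: `(a ∘ b)_l = ∑_{n=0}^l a_n b_{l-n}^{q^n}`. -/
def compC {F : Type*} [Field F] (q : ℕ) (a b : ℕ → F) : ℕ → F :=
  fun l => ∑ n ∈ Finset.range (l + 1), a n * b (l - n) ^ q ^ n

section Helpers
variable (p v : ℕ) [hp : Fact p.Prime]

lemma base_pos : (0:ℝ) < (p:ℝ) ^ v :=
  pow_pos (by exact_mod_cast hp.out.pos) v

lemma base_one_le : (1:ℝ) ≤ (p:ℝ) ^ v :=
  one_le_pow₀ (by exact_mod_cast hp.out.one_lt.le)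

lemma labs_nonneg (f : Kf p v) : 0 ≤ labs p v f := by
  unfold labs; split
  · exact le_refl 0
  · exact (zpow_pos (base_pos p v) _).le

lemma labs_zero : labs p v 0 = 0 := by simp [labs]

lemma labs_pos {f : Kf p v} (hf : f ≠ 0) : 0 < labs p v f := by
  unfold labs; rw [if_neg hf]; exact zpow_pos (base_pos p v) _

lemma labs_one : labs p v 1 = 1 := by
  unfold labs
  rw [if_neg one_ne_zero, HahnSeries.order_one]
  simp

lemma labs_mul (f g : Kf p v) : labs p v (f * g) = labs p v f * labs p v g := by
  by_cases hf : f = 0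
  · simp [hf, labs_zero]
  by_cases hg : g = 0
  · simp [hg, labs_zero]
  unfold labs
  rw [if_neg hf, if_neg hg, if_neg (mul_ne_zero hf hg),
    HahnSeries.order_mul hf hg, neg_add, zpow_add₀ (base_pos p v).ne']

lemma labs_pow (f : Kf p v) (k : ℕ) : labs p v (f ^ k) = labs p v f ^ k := by
  induction k with
  | zero => simp [labs_one p v]
  | succ n ih => rw [pow_succ, labs_mul, ih, pow_succ]

lemma labs_neg (f : Kf p v) : labs p v (-f) = labs p v f := by
  by_cases hf : f = 0
  · simp [hf]
  unfold labs
  rw [if_neg (neg_ne_zero.mpr hf), if_neg hf, HahnSeries.order_neg]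

lemma labs_inv (f : Kf p v) : labs p v f⁻¹ = (labs p v f)⁻¹ := by
  by_cases hf : f = 0
  · simp [hf, labs_zero]
  refine eq_inv_of_mul_eq_one_right ?_
  rw [← labs_mul, mul_inv_cancel₀ hf, labs_one]

lemma labs_add_le (f g : Kf p v) :
    labs p v (f + g) ≤ max (labs p v f) (labs p v g) := by
  by_cases h : f + g = 0
  · simp [h, labs_zero]
    exact Or.inl (labs_nonneg p v f)
  have hmin := HahnSeries.min_order_le_order_add h
  by_cases hf : f = 0
  · simp [hf] at *
  by_cases hg : g = 0
  · simp [hg] at *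
  unfold labs
  rw [if_neg h, if_neg hf, if_neg hg]
  rcases min_le_iff.mp hmin with h1 | h1
  · exact le_max_of_le_left (zpow_le_zpow_right₀ (base_one_le p v) (neg_le_neg h1))
  · exact le_max_of_le_right (zpow_le_zpow_right₀ (base_one_le p v) (neg_le_neg h1))

lemma labs_sum_le {ι : Type*} (s : Finset ι) (f : ι → Kf p v) {B : ℝ} (hB : 0 ≤ B) :
    (∀ i ∈ s, labs p v (f i) ≤ B) → labs p v (∑ i ∈ s, f i) ≤ B := by
  induction s using Finset.cons_induction with
  | empty => intro _; simpa [labs_zero] using hB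
  | cons a s ha ih =>
      intro h
      rw [Finset.sum_cons]
      exact (labs_add_le p v _ _).trans (max_le (h a (Finset.mem_cons_self a s))
        (ih fun i hi => h i (Finset.mem_cons_of_mem hi)))

instance : CharP (Kf p v) p :=
  charP_of_injective_ringHom
    (f := (HahnSeries.C : GaloisField p v →+* HahnSeries ℤ (GaloisField p v)))
    HahnSeries.C_injective p

lemma sum_pow_q {ι : Type*} (s : Finset ι) (f : ι → Kf p v) (m : ℕ) :
    (∑ i ∈ s, f i) ^ (p ^ v) ^ m = ∑ i ∈ s, f i ^ (p ^ v) ^ m := by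
  have h : ∀ x : Kf p v, x ^ (p ^ v) ^ m = iterateFrobenius (Kf p v) p (v * m) x := by
    intro x; rw [iterateFrobenius_def, pow_mul]
  simp_rw [h]
  exact map_sum (iterateFrobenius (Kf p v) p (v * m)) f s

end Helpers

noncomputable def Qc (p v : ℕ) [Fact p.Prime] (P : ℕ → Kf p v) : ℕ → Kf p v
  | 0 => (P 0)⁻¹
  | (l + 1) => -(P 0)⁻¹ * ∑ m ∈ (Finset.range (l + 1)).attach,
      P (l + 1 - m.1) * (Qc p v P m.1) ^ (p ^ v) ^ (l + 1 - m.1)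
  decreasing_by exact Finset.mem_range.mp m.2

noncomputable def Qc' (p v : ℕ) [Fact p.Prime] (P : ℕ → Kf p v) : ℕ → Kf p v
  | 0 => (P 0)⁻¹
  | (l + 1) => -(P 0 ^ (p ^ v) ^ (l + 1))⁻¹ * ∑ m ∈ (Finset.range (l + 1)).attach,
      Qc' p v P m.1 * P (l + 1 - m.1) ^ (p ^ v) ^ m.1
  decreasing_by exact Finset.mem_range.mp m.2

section Rec
variable (p v : ℕ) [hp : Fact p.Prime] (P : ℕ → Kf p v)

lemma Qc_zero : Qc p v P 0 = (P 0)⁻¹ := by rw [Qc]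

lemma Qc_succ (l : ℕ) : Qc p v P (l + 1) =
    -(P 0)⁻¹ * ∑ m ∈ Finset.range (l + 1),
      P (l + 1 - m) * (Qc p v P m) ^ (p ^ v) ^ (l + 1 - m) := by
  rw [Qc]
  congr 1
  exact Finset.sum_attach _ fun m => P (l + 1 - m) * (Qc p v P m) ^ (p ^ v) ^ (l + 1 - m)

lemma Qc'_zero : Qc' p v P 0 = (P 0)⁻¹ := by rw [Qc']

lemma Qc'_succ (l : ℕ) : Qc' p v P (l + 1) =
    -(P 0 ^ (p ^ v) ^ (l + 1))⁻¹ * ∑ m ∈ Finset.range (l + 1),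
      Qc' p v P m * P (l + 1 - m) ^ (p ^ v) ^ m := by
  rw [Qc']
  congr 1
  exact Finset.sum_attach _ fun m => Qc' p v P m * P (l + 1 - m) ^ (p ^ v) ^ m

end Rec

section Main
variable (p v : ℕ) [hp : Fact p.Prime] (P : ℕ → Kf p v)

lemma qpow_ne_zero (n : ℕ) : ((p ^ v) ^ n : ℕ) ≠ 0 :=
  pow_ne_zero _ (pow_ne_zero _ hp.out.pos.ne')

lemma compC_P_Qc (h0 : P 0 ≠ 0) (l : ℕ) :
    compC (p ^ v) P (Qc p v P) l = if l = 0 then 1 else 0 := by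
  cases l with
  | zero => simp [compC, Qc_zero, mul_inv_cancel₀ h0]
  | succ l =>
      rw [if_neg (Nat.succ_ne_zero l)]
      unfold compC
      rw [Finset.sum_range_succ']
      have hre : (∑ i ∈ Finset.range (l + 1),
            P (i + 1) * Qc p v P (l + 1 - (i + 1)) ^ (p ^ v) ^ (i + 1))
          = ∑ m ∈ Finset.range (l + 1),
            P (l + 1 - m) * Qc p v P m ^ (p ^ v) ^ (l + 1 - m) := by
        rw [← Finset.sum_range_reflect
          (fun m => P (l + 1 - m) * Qc p v P m ^ (p ^ v) ^ (l + 1 - m)) (l + 1)]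
        refine Finset.sum_congr rfl fun j hj => ?_
        have hj' := Finset.mem_range.mp hj
        have e1 : l + 1 - (l + 1 - 1 - j) = j + 1 := by omega
        have e2 : l + 1 - 1 - j = l + 1 - (j + 1) := by omega
        rw [e1, e2]
      have key : ∀ (x S : Kf p v), x ≠ 0 → S + x * (-x⁻¹ * S) = 0 := by
        intro x S hx
        rw [show S + x * (-x⁻¹ * S) = S - (x⁻¹ * x) * S by ring, inv_mul_cancel₀ hx,
          one_mul, sub_self]
      rw [hre, Nat.sub_zero, Qc_succ, pow_zero, pow_one]
      exact key (P 0) _ h0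

lemma compC_Qc'_P (h0 : P 0 ≠ 0) (l : ℕ) :
    compC (p ^ v) (Qc' p v P) P l = if l = 0 then 1 else 0 := by
  cases l with
  | zero => simp [compC, Qc'_zero, inv_mul_cancel₀ h0]
  | succ l =>
      rw [if_neg (Nat.succ_ne_zero l)]
      unfold compC
      rw [Finset.sum_range_succ, Qc'_succ, Nat.sub_self]
      have key : ∀ (x S : Kf p v), x ≠ 0 → S + -x⁻¹ * S * x = 0 := by
        intro x S hx
        rw [show S + -x⁻¹ * S * x = S - (x⁻¹ * x) * S by ring, inv_mul_cancel₀ hx,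
          one_mul, sub_self]
      exact key _ _ (pow_ne_zero _ h0)

lemma compC_delta_right (a : ℕ → Kf p v) (l : ℕ) :
    compC (p ^ v) a (fun m => if m = 0 then 1 else 0) l = a l := by
  unfold compC
  rw [Finset.sum_eq_single l]
  · simp
  · intro n hn hne
    have hn' := Finset.mem_range.mp hn
    have hln : l - n ≠ 0 := by omega
    simp [hln, zero_pow (qpow_ne_zero p v n)]
  · intro h; exact absurd (Finset.self_mem_range_succ l) h

lemma compC_delta_left (a : ℕ → Kf p v) (l : ℕ) :
    compC (p ^ v) (fun m => if m = 0 then 1 else 0) a l = a l := by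
  unfold compC
  rw [Finset.sum_eq_single 0]
  · simp
  · intro n hn hne
    simp [hne]
  · intro h; exact absurd (Finset.mem_range.mpr (Nat.succ_pos l)) h

lemma compC_assoc (a b c : ℕ → Kf p v) (l : ℕ) :
    compC (p ^ v) (compC (p ^ v) a b) c l
      = compC (p ^ v) a (compC (p ^ v) b c) l := by
  unfold compC
  simp_rw [sum_pow_q, Finset.sum_mul, Finset.mul_sum, mul_pow, ← pow_mul]
  rw [Finset.sum_sigma', Finset.sum_sigma']
  refine Finset.sum_nbij' (fun x => ⟨x.2, x.1 - x.2⟩) (fun y => ⟨y.1 + y.2, y.1⟩)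
    ?_ ?_ ?_ ?_ ?_
  · rintro ⟨n, m⟩ hx
    simp only [Finset.mem_sigma, Finset.mem_range] at hx ⊢
    omega
  · rintro ⟨m, i⟩ hy
    simp only [Finset.mem_sigma, Finset.mem_range] at hy ⊢
    omega
  · rintro ⟨n, m⟩ hx
    simp only [Finset.mem_sigma, Finset.mem_range] at hx
    simp only [Sigma.mk.inj_iff]
    constructor <;> first | omega | (apply heq_of_eq; rfl)
  · rintro ⟨m, i⟩ hy
    simp only [Finset.mem_sigma, Finset.mem_range] at hy
    simp only [Sigma.mk.inj_iff]
    constructor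
    · trivial
    · exact HEq.symm (by rw [Nat.add_sub_cancel_left])
  · rintro ⟨n, m⟩ hx
    simp only [Finset.mem_sigma, Finset.mem_range] at hx
    dsimp only
    have e1 : l - m - (n - m) = l - n := by omega
    have e2 : p ^ (v * (n - m)) * p ^ (v * m) = p ^ (v * n) := by
      rw [← pow_add, ← Nat.mul_add, (by omega : n - m + m = n)]
    rw [e1, e2, mul_assoc]

end Main

section Bound
variable (p v : ℕ) [hp : Fact p.Prime] (P : ℕ → Kf p v)

lemma exp_arith (hv : 0 < v) (hq : 2 ≤ p ^ v) {l m : ℕ} (hm : m ≤ l) :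
    (p ^ v) ^ (l + 1 - m) + (4 * (p ^ v) ^ m - 3) * (p ^ v) ^ (l + 1 - m)
      ≤ 4 * (p ^ v) ^ (l + 1) - 4 := by
  set X := (p ^ v) ^ (l + 1 - m) with hXdef
  set Y := (p ^ v) ^ m with hYdef
  have hXY : X * Y = (p ^ v) ^ (l + 1) := by
    rw [hXdef, hYdef, ← pow_add]; congr 1; omega
  have hX : 2 ≤ X := hq.trans (Nat.le_self_pow (by omega) _)
  have hY : 1 ≤ Y := Nat.one_le_pow _ _ (by omega)
  rw [← hXY]
  have h3 : 3 ≤ 4 * Y := by omega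
  have h4 : 4 ≤ 4 * (X * Y) := by nlinarith
  zify [h3, h4]
  nlinarith

set_option maxHeartbeats 2000000 in
lemma Qc_bound (h0 : P 0 ≠ 0) (hv : 0 < v) {A : ℝ} (hA : 0 < A)
    (hPA : ∀ k, labs p v (P k) ≤ A ^ (p ^ v) ^ k) :
    ∀ l, labs p v (Qc p v P l)
      ≤ (max 1 (max A (labs p v (P 0))⁻¹)) ^ (4 * (p ^ v) ^ l - 3) := by
  set M := max 1 (max A (labs p v (P 0))⁻¹) with hM
  have hM1 : (1 : ℝ) ≤ M := le_max_left _ _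
  have hM0 : (0 : ℝ) ≤ M := zero_le_one.trans hM1
  have hMA : A ≤ M := (le_max_left _ _).trans (le_max_right _ _)
  have hMi : (labs p v (P 0))⁻¹ ≤ M := (le_max_right _ _).trans (le_max_right _ _)
  have hq : 2 ≤ p ^ v := le_trans hp.out.two_le (Nat.le_self_pow hv.ne' p)
  intro l
  induction l using Nat.strong_induction_on with
  | _ l ih =>
    match l with
    | 0 =>
        rw [Qc_zero, labs_inv]
        calc (labs p v (P 0))⁻¹ ≤ M := hMi
          _ = M ^ 1 := (pow_one M).symm
          _ ≤ M ^ (4 * (p ^ v) ^ 0 - 3) := pow_le_pow_right₀ hM1 (by norm_num)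
    | (l + 1) =>
        rw [Qc_succ, labs_mul, labs_neg, labs_inv]
        have hE : 2 ≤ (p ^ v) ^ (l + 1) := hq.trans (Nat.le_self_pow (by omega) _)
        have hsum : labs p v (∑ m ∈ Finset.range (l + 1),
              P (l + 1 - m) * Qc p v P m ^ (p ^ v) ^ (l + 1 - m))
            ≤ M ^ (4 * (p ^ v) ^ (l + 1) - 4) := by
          apply labs_sum_le
          · positivity
          · intro m hm
            have hm' := Finset.mem_range.mp hm
            rw [labs_mul, labs_pow]
            have h1 : labs p v (P (l + 1 - m)) ≤ A ^ (p ^ v) ^ (l + 1 - m) := hPA _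
            have h2 : labs p v (Qc p v P m) ≤ M ^ (4 * (p ^ v) ^ m - 3) :=
              ih m (by omega)
            calc labs p v (P (l + 1 - m)) * labs p v (Qc p v P m) ^ (p ^ v) ^ (l + 1 - m)
                ≤ A ^ (p ^ v) ^ (l + 1 - m)
                    * (M ^ (4 * (p ^ v) ^ m - 3)) ^ (p ^ v) ^ (l + 1 - m) := by
                  exact mul_le_mul h1 (pow_le_pow_left₀ (labs_nonneg p v _) h2 _)
                    (pow_nonneg (labs_nonneg p v _) _) (by positivity)
              _ ≤ M ^ (p ^ v) ^ (l + 1 - m)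
                    * (M ^ (4 * (p ^ v) ^ m - 3)) ^ (p ^ v) ^ (l + 1 - m) := by
                  apply mul_le_mul_of_nonneg_right (pow_le_pow_left₀ hA.le hMA _)
                    (by positivity)
              _ = M ^ ((p ^ v) ^ (l + 1 - m)
                    + (4 * (p ^ v) ^ m - 3) * (p ^ v) ^ (l + 1 - m)) := by
                  rw [← pow_mul M (4 * (p ^ v) ^ m - 3) ((p ^ v) ^ (l + 1 - m)),
                    ← pow_add M ((p ^ v) ^ (l + 1 - m))
                      ((4 * (p ^ v) ^ m - 3) * (p ^ v) ^ (l + 1 - m))]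
              _ ≤ M ^ (4 * (p ^ v) ^ (l + 1) - 4) :=
                  pow_le_pow_right₀ hM1 (exp_arith p v hv hq (by omega))
        calc (labs p v (P 0))⁻¹ * labs p v (∑ m ∈ Finset.range (l + 1),
              P (l + 1 - m) * Qc p v P m ^ (p ^ v) ^ (l + 1 - m))
            ≤ M * M ^ (4 * (p ^ v) ^ (l + 1) - 4) :=
              mul_le_mul hMi hsum (labs_nonneg p v _) hM0
          _ = M ^ (1 + (4 * (p ^ v) ^ (l + 1) - 4)) := by rw [pow_add M 1 (4 * (p ^ v) ^ (l + 1) - 4), pow_one]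
          _ = M ^ (4 * (p ^ v) ^ (l + 1) - 3) := by congr 1; omega

end Bound

theorem P1_invertible (p v : ℕ) [Fact p.Prime] (hv : 0 < v)
    (P₁ : ℕ → Kf p v) (hP : InRK p v P₁) (h0 : P₁ 0 ≠ 0) :
    ∃ Q : ℕ → Kf p v, InRK p v Q ∧
      (∀ l, compC (p ^ v) P₁ Q l = if l = 0 then 1 else 0) ∧
      (∀ l, compC (p ^ v) Q P₁ l = if l = 0 then 1 else 0) := by
  obtain ⟨A, hA, hPA⟩ := hP
  set M := max 1 (max A (labs p v (P₁ 0))⁻¹) with hMdef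
  have hM1 : (1 : ℝ) ≤ M := le_max_left _ _
  have hb := Qc_bound p v P₁ h0 hv hA hPA
  have hQQ' : Qc' p v P₁ = Qc p v P₁ := by
    funext l
    have ha : compC (p ^ v) (Qc' p v P₁) P₁ = fun m => if m = 0 then 1 else 0 :=
      funext (compC_Qc'_P p v P₁ h0)
    have hbf : compC (p ^ v) P₁ (Qc p v P₁) = fun m => if m = 0 then 1 else 0 :=
      funext (compC_P_Qc p v P₁ h0)
    calc Qc' p v P₁ l
        = compC (p ^ v) (Qc' p v P₁) (fun m => if m = 0 then 1 else 0) l :=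
          (compC_delta_right p v _ l).symm
      _ = compC (p ^ v) (Qc' p v P₁) (compC (p ^ v) P₁ (Qc p v P₁)) l := by rw [hbf]
      _ = compC (p ^ v) (compC (p ^ v) (Qc' p v P₁) P₁) (Qc p v P₁) l :=
          (compC_assoc p v _ _ _ l).symm
      _ = compC (p ^ v) (fun m => if m = 0 then 1 else 0) (Qc p v P₁) l := by rw [ha]
      _ = Qc p v P₁ l := compC_delta_left p v _ l
  refine ⟨Qc p v P₁, ⟨M ^ 4, pow_pos (zero_lt_one.trans_le hM1) 4, fun k => ?_⟩,
    compC_P_Qc p v P₁ h0, fun l => ?_⟩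
  · calc labs p v (Qc p v P₁ k) ≤ M ^ (4 * (p ^ v) ^ k - 3) := hb k
      _ ≤ M ^ (4 * (p ^ v) ^ k) := pow_le_pow_right₀ hM1 (Nat.sub_le _ _)
      _ = (M ^ 4) ^ ((p ^ v) ^ k) := pow_mul M 4 _
  · rw [← hQQ']; exact compC_Qc'_P p v P₁ h0 l
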